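/- Let C ⊆ [0,1] be the fat Cantor set with level-n interval length l_n = 1/(2^{n+1} − 1) and let F = C × C ⊆ ℝ². Then for every 0 < α < 1/2, D_*(α, F) = 0; moreover there is a dense Gδ subset 𝒢 of C₁^α(F) such that λ(f(F)) = 0 for every f ∈ 𝒢. -/

import Mathlib

/-!
At level `N`, `F = C × C` splits into `4 ^ N` cells of diameter at most `2 l_N`, any two of them
at distance at least `l_N²`. Given `f ∈ C₁^α(F)`, let `ρ` be the largest pseudometric below
`d ^ α` that vanishes inside cells; then `g x = sup_z (f z - ρ(x, z))` is again `1`-Hölder-`α`,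
constant on cells and `≥ f`. A chain of cost at most `2 ^ α` jumps between distinct cells at most
`2 ^ α / l_N^{2α}` times, so by subadditivity of `t ↦ t ^ α` it loses at most
`O(l_N^{α(1 - 2α)})` against `d ^ α`; this tends to `0` because `α < 1/2`, so `g ≤ f + o(1)`.
Hence finite-range functions are dense in the complete space `C₁^α(F)`, and the functions that
lie within `1 / (k · #range h)` of some finite-range `h` for every `k` form a dense `Gδ` of
functions with Lebesgue-null range. Null range makes `{r : dim_H f⁻¹(r) ≥ d}` null for `d > 0`,
so `D_*^f(F) = 0` on that `Gδ`, which every dense `Gδ` meets by Baire.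
-/

open MeasureTheory

noncomputable section

/-- `l_n = 1/(2^{n+1} − 1)`, the common length of the `2^n` maximal closed
subintervals of the stage-`n` set `C_n` of the fat Cantor set construction. -/
def lCant (n : ℕ) : ℝ := 1 / (2 ^ (n + 1) - 1)

/-- Auxiliary recursion computing the left endpoint of the level-`n` interval
indexed by a binary word (`false` = left child, `true` = right child). -/
def leftEndAux : ℕ → ℝ → List Bool → ℝ
  | _, a, [] => a
  | n, a, b :: w => leftEndAux (n + 1) (if b then a + lCant n - lCant (n + 1) else a) w

/-- The left endpoint of the interval of the fat Cantor set construction indexed by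
the binary word `w`. -/
def leftEnd (w : List Bool) : ℝ := leftEndAux 0 0 w

/-- The stage-`n` set `C_n`: the union of the `2^n` closed intervals of length `l_n`. -/
def cantorStage (n : ℕ) : Set ℝ :=
  ⋃ (w : List Bool) (_ : w.length = n), Set.Icc (leftEnd w) (leftEnd w + lCant n)

/-- The fat Cantor set `C = ⋂ₙ C_n`. -/
def fatC : Set ℝ := ⋂ n : ℕ, cantorStage n

/-- The product set `F = C × C ⊆ ℝ²` (with the Euclidean metric). -/
def fatSquare : Set (EuclideanSpace ℝ (Fin 2)) := {x | x 0 ∈ fatC ∧ x 1 ∈ fatC}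

/-- `C₁^α(F)`: the set of 1-Hölder-α functions `F → ℝ`, as a subset of the bounded
continuous functions on `F` (which carry the supremum metric). -/
def HolderBall (α : ℝ) {p : ℕ} (F : Set (EuclideanSpace ℝ (Fin p))) :
    Set (BoundedContinuousFunction ↥F ℝ) :=
  {f | ∀ x y : ↥F,
    |f x - f y| ≤ dist (x : EuclideanSpace ℝ (Fin p)) (y : EuclideanSpace ℝ (Fin p)) ^ α}

/-- `D_*^f(F) = sup {d : λ{r : dim_H (f⁻¹(r)) ≥ d} > 0}`. -/
def DstarF {p : ℕ} (F : Set (EuclideanSpace ℝ (Fin p))) (f : ↥F → ℝ) : ℝ :=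
  sSup {d : ℝ | 0 < volume {r : ℝ | ENNReal.ofReal d ≤ dimH (Subtype.val '' (f ⁻¹' {r}))}}

/-- `D_*(α, F)`: the supremum over all dense Gδ subsets `G` of `C₁^α(F)` of
`inf {D_*^f(F) : f ∈ G}`. -/
def DStar {p : ℕ} (α : ℝ) (F : Set (EuclideanSpace ℝ (Fin p))) : ℝ :=
  sSup {d : ℝ | ∃ G : Set ↥(HolderBall α F), Dense G ∧ IsGδ G ∧
    d = sInf ((fun g : ↥(HolderBall α F) =>
      DstarF F ⇑(g : BoundedContinuousFunction ↥F ℝ)) '' G)}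

open Set Filter Topology
open scoped NNReal ENNReal BoundedContinuousFunction

lemma continuous_of_abs_sub_le_rpow {X : Type*} [PseudoMetricSpace X] {g : X → ℝ} {α : ℝ}
    (hα : 0 < α) (hg : ∀ x y, |g x - g y| ≤ dist x y ^ α) : Continuous g := by
  refine Metric.continuous_iff.2 fun x ε hε => ⟨ε ^ α⁻¹, by positivity, fun y hy => ?_⟩
  calc dist (g y) (g x) ≤ dist y x ^ α := hg y x
    _ < (ε ^ α⁻¹) ^ α := Real.rpow_lt_rpow dist_nonneg hy hα
    _ = ε := Real.rpow_inv_rpow hε.le hα.ne'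

section SeparatedPartition

variable {X ι : Type*} [PseudoMetricSpace X]

structure IsSeparatedPartition (cell : X → ι) (s D : ℝ) : Prop where
  finite_range : (range cell).Finite
  le_dist : ∀ x y, cell x ≠ cell y → s ≤ dist x y
  dist_le : ∀ x y, cell x = cell y → dist x y ≤ D

open scoped Classical in
def cellPreDist (cell : X → ι) (α : ℝ) (x y : X) : ℝ≥0 :=
  if cell x = cell y then 0 else nndist x y ^ α

lemma cellPreDist_self (cell : X → ι) (α : ℝ) (x : X) : cellPreDist cell α x x = 0 :=
  if_pos rfl

lemma cellPreDist_comm (cell : X → ι) (α : ℝ) (x y : X) :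
    cellPreDist cell α x y = cellPreDist cell α y x := by
  by_cases h : cell x = cell y <;> simp [cellPreDist, h, eq_comm, nndist_comm]

/-- The largest pseudometric below `cellPreDist`: the infimum of its sums along chains. -/
def chainDist (cell : X → ι) (α : ℝ) (x y : X) : ℝ :=
  @dist X (PseudoMetricSpace.ofPreNNDist (cellPreDist cell α) (cellPreDist_self cell α)
    (cellPreDist_comm cell α)).toDist x y

variable {cell : X → ι} {α s D B : ℝ}

lemma chainDist_eq_iInf (x y : X) : chainDist cell α x y =
    ⨅ l : List X, (((x :: l).zipWith (cellPreDist cell α) (l ++ [y])).sum : ℝ) :=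
  NNReal.coe_iInf _

lemma chainDist_nonneg (x y : X) : 0 ≤ chainDist cell α x y :=
  @dist_nonneg X (PseudoMetricSpace.ofPreNNDist _ _ _) x y

lemma chainDist_triangle (x y z : X) :
    chainDist cell α x z ≤ chainDist cell α x y + chainDist cell α y z :=
  @dist_triangle X (PseudoMetricSpace.ofPreNNDist _ _ _) x y z

lemma chainDist_le_cellPreDist (x y : X) : chainDist cell α x y ≤ cellPreDist cell α x y :=
  PseudoMetricSpace.dist_ofPreNNDist_le _ _ _ x y

lemma chainDist_eq_zero_of_cell_eq {x y : X} (h : cell x = cell y) : chainDist cell α x y = 0 :=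
  le_antisymm (by simpa [cellPreDist, h] using chainDist_le_cellPreDist (cell := cell) (α := α) x y)
    (chainDist_nonneg x y)

lemma chainDist_le_rpow_dist (x y : X) : chainDist cell α x y ≤ dist x y ^ α := by
  refine (chainDist_le_cellPreDist x y).trans ?_
  unfold cellPreDist
  split_ifs
  · exact Real.rpow_nonneg dist_nonneg α
  · simp

/-- A chain from the cell of `x` to `y` of cost `c` makes `J` jumps between distinct cells, of
total length `S`; everything else happens inside cells of diameter at most `D`. -/
def JumpSplit (cell : X → ι) (s D α : ℝ) (x y : X) (c : ℝ) : Prop :=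
  ∃ S : ℝ, ∃ J : ℕ, 0 ≤ S ∧ (∀ x', cell x' = cell x → dist x' y ≤ S + (J + 1) * D) ∧
    S ^ α ≤ c ∧ J * s ^ α ≤ c

lemma jumpSplit_self (hP : IsSeparatedPartition cell s D) (hα : 0 < α) (y : X) :
    JumpSplit cell s D α y y 0 :=
  ⟨0, 0, le_rfl, fun x' hx' => by simpa using hP.dist_le x' y hx', by
    simp [Real.zero_rpow hα.ne'], by simp⟩

lemma JumpSplit.cons (hP : IsSeparatedPartition cell s D) (hα0 : 0 < α) (hα1 : α ≤ 1)
    (hs : 0 ≤ s) {x z y : X} {c : ℝ} (h : JumpSplit cell s D α z y c) :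
    JumpSplit cell s D α x y (cellPreDist cell α x z + c) := by
  obtain ⟨S, J, hS, hdist, hSc, hJc⟩ := h
  by_cases hxz : cell x = cell z
  · simp only [cellPreDist, hxz, if_true, NNReal.coe_zero, zero_add]
    exact ⟨S, J, hS, fun x' hx' => hdist x' (hx'.trans hxz), hSc, hJc⟩
  have hcost : (cellPreDist cell α x z : ℝ) = dist x z ^ α := by simp [cellPreDist, hxz]
  rw [hcost]
  refine ⟨dist x z + S, J + 1, by positivity, fun x' hx' => ?_, ?_, ?_⟩
  · have h1 := hP.dist_le x' x hx'
    have h2 := hdist z rfl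
    calc dist x' y ≤ dist x' x + dist x z + dist z y := dist_triangle4 x' x z y
      _ ≤ dist x z + S + ((J + 1 : ℕ) + 1) * D := by push_cast; linarith
  · calc (dist x z + S) ^ α ≤ dist x z ^ α + S ^ α :=
          Real.rpow_add_le_add_rpow dist_nonneg hS hα0.le hα1
      _ ≤ dist x z ^ α + c := by linarith
  · have := Real.rpow_le_rpow hs (hP.le_dist x z hxz) hα0.le
    push_cast
    linarith

lemma jumpSplit_chain (hP : IsSeparatedPartition cell s D) (hα0 : 0 < α) (hα1 : α ≤ 1)
    (hs : 0 ≤ s) (y : X) (l : List X) (x : X) :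
    JumpSplit cell s D α x y ((x :: l).zipWith (cellPreDist cell α) (l ++ [y])).sum := by
  induction l generalizing x with
  | nil => simpa using (jumpSplit_self hP hα0 y).cons (x := x) hP hα0 hα1 hs
  | cons z l ih => simpa using (ih z).cons (x := x) hP hα0 hα1 hs

/-- A chain of cost below `B ^ α` makes at most `B ^ α / s ^ α` jumps; subadditivity of
`t ↦ t ^ α` then bounds the error by the total diameter of the cells it visits. -/
theorem rpow_dist_le_chainDist_add (hP : IsSeparatedPartition cell s D) (hα0 : 0 < α)
    (hα1 : α ≤ 1) (hs : 0 < s) (hD : 0 ≤ D) (hB : ∀ x y : X, dist x y ≤ B) (x y : X) :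
    dist x y ^ α ≤ chainDist cell α x y + ((B ^ α / s ^ α + 1) * D) ^ α := by
  set E := ((B ^ α / s ^ α + 1) * D) ^ α
  have hsα : 0 < s ^ α := Real.rpow_pos_of_pos hs α
  have hB0 : 0 ≤ B := dist_self x ▸ hB x x
  have hE : 0 ≤ E := Real.rpow_nonneg (by positivity) α
  suffices h : ∀ l : List X,
      dist x y ^ α - E ≤ (((x :: l).zipWith (cellPreDist cell α) (l ++ [y])).sum : ℝ) by
    have := le_ciInf h
    rw [chainDist_eq_iInf]
    linarith
  intro l
  obtain ⟨S, J, hS, hdist, hSc, hJc⟩ := jumpSplit_chain hP hα0 hα1 hs.le y l x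
  set c := (((x :: l).zipWith (cellPreDist cell α) (l ++ [y])).sum : ℝ)
  suffices dist x y ^ α ≤ c + E by linarith
  by_cases hc : B ^ α ≤ c
  · have := Real.rpow_le_rpow dist_nonneg (hB x y) hα0.le
    linarith
  have hJ : (J : ℝ) ≤ B ^ α / s ^ α := by
    rw [le_div_iff₀ hsα]
    linarith
  calc dist x y ^ α ≤ (S + (J + 1) * D) ^ α :=
        Real.rpow_le_rpow dist_nonneg (hdist x rfl) hα0.le
    _ ≤ S ^ α + ((J + 1) * D) ^ α :=
        Real.rpow_add_le_add_rpow hS (by positivity) hα0.le hα1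
    _ ≤ c + E := by
        gcongr
        exact Real.rpow_le_rpow (by positivity)
          (mul_le_mul_of_nonneg_right (by linarith) hD) hα0.le

/-- The McShane-type envelope `g x = ⨆ z, f z - chainDist cell α x z` is constant on cells,
since `chainDist` vanishes inside them. -/
theorem exists_holder_finiteRange_approx (hP : IsSeparatedPartition cell s D) (hα0 : 0 < α)
    (hα1 : α ≤ 1) (hs : 0 < s) (hD : 0 ≤ D) (hB : ∀ x y : X, dist x y ≤ B) (f : X → ℝ)
    (hf : ∀ x y, |f x - f y| ≤ dist x y ^ α) :
    ∃ g : X → ℝ, (∀ x y, |g x - g y| ≤ dist x y ^ α) ∧ (range g).Finite ∧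
      ∀ x, |g x - f x| ≤ ((B ^ α / s ^ α + 1) * D) ^ α := by
  set E := ((B ^ α / s ^ α + 1) * D) ^ α
  have hupper : ∀ x z, f z - chainDist cell α x z ≤ f x + E := fun x z => by
    have := rpow_dist_le_chainDist_add hP hα0 hα1 hs hD hB x z
    have := (abs_le.1 (hf z x)).2
    rw [dist_comm] at this
    linarith
  have hbdd : ∀ x, BddAbove (range fun z => f z - chainDist cell α x z) :=
    fun x => ⟨f x + E, forall_mem_range.2 (hupper x)⟩
  set g : X → ℝ := fun x => ⨆ z, f z - chainDist cell α x z
  have hlip : ∀ x y, g x ≤ g y + chainDist cell α y x := fun x y => by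
    have : Nonempty X := ⟨x⟩
    refine ciSup_le fun z => ?_
    have h1 := le_ciSup (hbdd y) z
    have h2 := chainDist_triangle (cell := cell) (α := α) y x z
    linarith
  have hfac : ∀ x y, cell x = cell y → g x = g y := fun x y h => by
    have h1 := hlip x y
    have h2 := hlip y x
    rw [chainDist_eq_zero_of_cell_eq h.symm] at h1
    rw [chainDist_eq_zero_of_cell_eq h] at h2
    linarith
  refine ⟨g, fun x y => abs_sub_le_iff.2 ⟨?_, ?_⟩, ?_, fun x => abs_sub_le_iff.2 ⟨?_, ?_⟩⟩
  · have := chainDist_le_rpow_dist (cell := cell) (α := α) y x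
    rw [dist_comm] at this
    linarith [hlip x y]
  · linarith [hlip y x, chainDist_le_rpow_dist (cell := cell) (α := α) x y]
  · refine (hP.finite_range.image (Function.extend cell g 0)).subset ?_
    rintro _ ⟨x, rfl⟩
    exact ⟨cell x, mem_range_self x, Function.FactorsThrough.extend_apply hfac 0 x⟩
  · have : Nonempty X := ⟨x⟩
    exact sub_le_iff_le_add'.2 (ciSup_le (hupper x))
  · have h := le_ciSup (hbdd x) x
    have h0 := chainDist_eq_zero_of_cell_eq (cell := cell) (α := α) (rfl : cell x = cell x)
    have hB0 : 0 ≤ B := dist_self x ▸ hB x x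
    have : 0 ≤ E := by positivity
    linarith

end SeparatedPartition

section FatCantor

lemma lCant_pos (n : ℕ) : 0 < lCant n :=
  one_div_pos.2 (sub_pos.2 (one_lt_pow₀ one_lt_two n.succ_ne_zero))

lemma lCant_antitone : Antitone lCant := by
  refine antitone_nat_of_succ_le fun n => ?_
  have h : (1 : ℝ) < 2 ^ (n + 1) := one_lt_pow₀ one_lt_two n.succ_ne_zero
  exact one_div_le_one_div_of_le (by linarith) (by rw [pow_succ _ (n + 1)]; linarith)

/-- The gap opened between the two children of a level-`n` interval. -/
lemma lCant_sub_two_mul_lCant_succ (n : ℕ) :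
    lCant n - 2 * lCant (n + 1) = lCant n * lCant (n + 1) := by
  have h1 : (1 : ℝ) < 2 ^ (n + 1) := one_lt_pow₀ one_lt_two n.succ_ne_zero
  simp only [lCant, pow_succ _ (n + 1)]
  generalize (2 : ℝ) ^ (n + 1) = a at h1 ⊢
  field_simp [(by linarith : a - 1 ≠ 0), (by linarith : a * 2 - 1 ≠ 0)]
  ring

lemma tendsto_lCant_atTop : Tendsto lCant atTop (𝓝 0) := by
  have h : Tendsto (fun n : ℕ => (2 : ℝ) ^ (n + 1) - 1) atTop atTop :=
    tendsto_atTop_add_const_right _ _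
      ((tendsto_pow_atTop_atTop_of_one_lt one_lt_two).comp (tendsto_add_atTop_nat 1))
  exact h.inv_tendsto_atTop.congr fun n => by simp [lCant]

def cantorInterval (n : ℕ) (a : ℝ) (w : List Bool) : Set ℝ :=
  Icc (leftEndAux n a w) (leftEndAux n a w + lCant (n + w.length))

lemma cantorInterval_cons (n : ℕ) (a : ℝ) (b : Bool) (w : List Bool) :
    cantorInterval n a (b :: w) =
      cantorInterval (n + 1) (if b then a + lCant n - lCant (n + 1) else a) w := by
  simp only [cantorInterval, leftEndAux, List.length_cons,
    show n + (w.length + 1) = n + 1 + w.length by omega]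

lemma cantorInterval_subset (w : List Bool) :
    ∀ n a, cantorInterval n a w ⊆ Icc a (a + lCant n) := by
  induction w with
  | nil => intro n a; simp [cantorInterval, leftEndAux]
  | cons b w ih =>
    intro n a
    rw [cantorInterval_cons]
    refine (ih _ _).trans (Icc_subset_Icc ?_ ?_) <;>
      cases b <;>
      simp only [Bool.false_eq_true, ↓reduceIte, le_refl, add_le_add_iff_left, sub_add_cancel] <;>
      linarith [lCant_antitone n.le_succ]

lemma sq_lCant_le_abs_sub_of_ne (w : List Bool) :
    ∀ w' : List Bool, w.length = w'.length → w ≠ w' → ∀ n a x y,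
      x ∈ cantorInterval n a w → y ∈ cantorInterval n a w' →
      lCant (n + w.length) ^ 2 ≤ |x - y| := by
  induction w with
  | nil => rintro (_ | _) h hne <;> simp_all
  | cons b t ih =>
    rintro (_ | ⟨b', t'⟩) hlen hne n a x y hx hy
    · simp at hlen
    rw [cantorInterval_cons] at hx hy
    have hm : n + (b :: t).length = n + 1 + t.length := by simp only [List.length_cons]; omega
    rw [hm]
    by_cases hb : b = b'
    · subst hb
      exact ih t' (by simpa using hlen) (by simpa using hne) (n + 1) _ x y hx hy
    have hgap : lCant n * lCant (n + 1) ≤ |x - y| := by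
      have := lCant_sub_two_mul_lCant_succ n
      have hx' := cantorInterval_subset _ _ _ hx
      have hy' := cantorInterval_subset _ _ _ hy
      cases b <;> cases b' <;>
        simp only [mem_Icc, Bool.false_eq_true, Bool.true_eq_false, ↓reduceIte,
          not_true_eq_false] at hb hx' hy'
      · exact le_abs.2 (Or.inr (by linarith))
      · exact le_abs.2 (Or.inl (by linarith))
    refine le_trans ?_ hgap
    rw [sq]
    exact mul_le_mul (lCant_antitone (by omega)) (lCant_antitone (by omega))
      (lCant_pos _).le (lCant_pos _).le

lemma mem_cantorStage_iff {x : ℝ} {N : ℕ} :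
    x ∈ cantorStage N ↔ ∃ w : List Bool, w.length = N ∧ x ∈ cantorInterval 0 0 w := by
  simp only [cantorStage, cantorInterval, mem_iUnion, exists_prop, zero_add, leftEnd]
  constructor <;> rintro ⟨w, rfl, hw⟩ <;> exact ⟨w, rfl, hw⟩

/-- The level-`N` interval containing `x`; junk unless `x ∈ fatC`. -/
def cantorWord (N : ℕ) (x : ℝ) : List Bool :=
  Classical.epsilon fun w => w.length = N ∧ x ∈ cantorInterval 0 0 w

lemma cantorWord_spec {x : ℝ} (hx : x ∈ fatC) (N : ℕ) :
    (cantorWord N x).length = N ∧ x ∈ cantorInterval 0 0 (cantorWord N x) :=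
  Classical.epsilon_spec (mem_cantorStage_iff.1 (mem_iInter.1 hx N))

lemma fatC_subset_Icc : fatC ⊆ Icc 0 1 := fun x hx => by
  obtain ⟨hlen, hmem⟩ := cantorWord_spec hx 0
  rw [List.length_eq_zero_iff.1 hlen] at hmem
  norm_num [cantorInterval, leftEndAux, lCant] at hmem
  exact hmem

lemma sq_lCant_le_dist_of_cantorWord_ne {x y : ℝ} (hx : x ∈ fatC) (hy : y ∈ fatC) {N : ℕ}
    (h : cantorWord N x ≠ cantorWord N y) : lCant N ^ 2 ≤ dist x y := by
  obtain ⟨hxN, hxw⟩ := cantorWord_spec hx N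
  obtain ⟨hyN, hyw⟩ := cantorWord_spec hy N
  simpa [hxN, Real.dist_eq] using
    sq_lCant_le_abs_sub_of_ne _ _ (hxN.trans hyN.symm) h 0 0 x y hxw hyw

lemma dist_le_lCant_of_cantorWord_eq {x y : ℝ} (hx : x ∈ fatC) (hy : y ∈ fatC) {N : ℕ}
    (h : cantorWord N x = cantorWord N y) : dist x y ≤ lCant N := by
  obtain ⟨hxN, hxw⟩ := cantorWord_spec hx N
  obtain ⟨-, hyw⟩ := cantorWord_spec hy N
  rw [← h] at hyw
  simpa [cantorInterval, hxN] using Real.dist_le_of_mem_Icc hxw hyw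

lemma dist_le_dist_zero_add_dist_one (x y : EuclideanSpace ℝ (Fin 2)) :
    dist x y ≤ dist (x 0) (y 0) + dist (x 1) (y 1) := by
  rw [EuclideanSpace.dist_eq, Fin.sum_univ_two]
  refine Real.sqrt_le_iff.2 ⟨by positivity, ?_⟩
  nlinarith [dist_nonneg (x := x 0) (y := y 0), dist_nonneg (x := x 1) (y := y 1)]

def fatSquareCell (N : ℕ) (x : fatSquare) : List Bool × List Bool :=
  (cantorWord N (x.1 0), cantorWord N (x.1 1))

lemma isSeparatedPartition_fatSquareCell (N : ℕ) :
    IsSeparatedPartition (fatSquareCell N) (lCant N ^ 2) (2 * lCant N) where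
  finite_range := ((List.finite_length_eq Bool N).prod (List.finite_length_eq Bool N)).subset <| by
    rintro _ ⟨x, rfl⟩
    exact ⟨(cantorWord_spec x.2.1 N).1, (cantorWord_spec x.2.2 N).1⟩
  le_dist x y h := by
    rcases not_and_or.1 (mt Prod.ext_iff.2 h) with h0 | h1
    · exact (sq_lCant_le_dist_of_cantorWord_ne x.2.1 y.2.1 h0).trans (PiLp.dist_apply_le _ _ 0)
    · exact (sq_lCant_le_dist_of_cantorWord_ne x.2.2 y.2.2 h1).trans (PiLp.dist_apply_le _ _ 1)
  dist_le x y h := by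
    have h0 := dist_le_lCant_of_cantorWord_eq x.2.1 y.2.1 (congrArg Prod.fst h)
    have h1 := dist_le_lCant_of_cantorWord_eq x.2.2 y.2.2 (congrArg Prod.snd h)
    linarith [dist_le_dist_zero_add_dist_one x.1 y.1, Subtype.dist_eq x y]

lemma dist_le_two_of_fatSquare (x y : fatSquare) : dist x y ≤ 2 := by
  have h0 := Real.dist_le_of_mem_Icc_01 (fatC_subset_Icc x.2.1) (fatC_subset_Icc y.2.1)
  have h1 := Real.dist_le_of_mem_Icc_01 (fatC_subset_Icc x.2.2) (fatC_subset_Icc y.2.2)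
  linarith [dist_le_dist_zero_add_dist_one x.1 y.1, Subtype.dist_eq x y]

end FatCantor

section HolderSpace

variable {α : ℝ} {p : ℕ}

lemma isClosed_holderBall (α : ℝ) (F : Set (EuclideanSpace ℝ (Fin p))) :
    IsClosed (HolderBall α F) := by
  simp only [HolderBall, ofPred_forall]
  exact isClosed_iInter fun x => isClosed_iInter fun y =>
    isClosed_le ((continuous_eval_const x).sub (continuous_eval_const y)).abs continuous_const

instance (α : ℝ) (F : Set (EuclideanSpace ℝ (Fin p))) : CompleteSpace (HolderBall α F) :=
  (isClosed_holderBall α F).completeSpace_coe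

instance (α : ℝ) (F : Set (EuclideanSpace ℝ (Fin p))) : Nonempty (HolderBall α F) :=
  ⟨⟨0, fun x y => by simpa using Real.rpow_nonneg dist_nonneg α⟩⟩

/-- `(2 ^ α / (l ^ 2) ^ α + 1) * 2 l = 2 * 2 ^ α * l ^ (1 - 2α) + 2 l`, continuous at `l = 0`
because `1 - 2α > 0`. -/
lemma tendsto_fatSquare_approx_error (hα0 : 0 < α) (hα : α < 1 / 2) :
    Tendsto (fun N => ((2 ^ α / (lCant N ^ 2) ^ α + 1) * (2 * lCant N)) ^ α) atTop (𝓝 0) := by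
  set φ : ℝ → ℝ := fun t => (2 * 2 ^ α * t ^ (1 - 2 * α) + 2 * t) ^ α
  have hφ : Continuous φ :=
    (Real.continuous_rpow_const hα0.le).comp (continuous_const.mul
      (Real.continuous_rpow_const (by linarith)) |>.add (continuous_const.mul continuous_id))
  have hφ0 : φ 0 = 0 := by
    simp [φ, Real.zero_rpow (by linarith : 1 - 2 * α ≠ 0), Real.zero_rpow hα0.ne']
  refine (hφ0 ▸ (hφ.tendsto 0).comp tendsto_lCant_atTop).congr fun N => ?_
  have hl := lCant_pos N
  simp only [Function.comp_apply, φ]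
  congr 1
  rw [← Real.rpow_natCast, ← Real.rpow_mul hl.le, Real.rpow_sub hl, Real.rpow_one]
  field_simp
  push_cast
  ring_nf

theorem dense_finiteRange_holderBall_fatSquare (hα0 : 0 < α) (hα : α < 1 / 2) :
    Dense {h : HolderBall α fatSquare | (range ⇑(h : fatSquare →ᵇ ℝ)).Finite} := by
  refine Metric.dense_iff.2 fun f r hr => ?_
  obtain ⟨N, hN⟩ :=
    ((tendsto_fatSquare_approx_error hα0 hα).eventually (gt_mem_nhds (half_pos hr))).exists
  obtain ⟨g, hg, hfin, hclose⟩ := exists_holder_finiteRange_approx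
    (isSeparatedPartition_fatSquareCell N) hα0 (by linarith) (pow_pos (lCant_pos N) 2)
    (by linarith [lCant_pos N]) dist_le_two_of_fatSquare _ f.2
  let gB : fatSquare →ᵇ ℝ := .mkOfBound ⟨g, continuous_of_abs_sub_le_rpow hα0 hg⟩ (2 ^ α)
    fun x y => (hg x y).trans (Real.rpow_le_rpow dist_nonneg (dist_le_two_of_fatSquare x y) hα0.le)
  refine ⟨⟨gB, hg⟩, ?_, hfin⟩
  have : dist gB f ≤ r / 2 :=
    (BoundedContinuousFunction.dist_le (half_pos hr).le).2 fun x => (hclose x).trans hN.le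
  exact Metric.mem_ball.2 (this.trans_lt (half_lt_self hr))

end HolderSpace

section NullRange

variable {Z : Type*} [TopologicalSpace Z] {K : Set (Z →ᵇ ℝ)}

lemma volume_range_le_of_dist_lt {f h : Z →ᵇ ℝ} (hh : (range h).Finite) {r : ℝ}
    (hfh : dist f h < r) : volume (range f) ≤ (range h).ncard * ENNReal.ofReal (2 * r) := by
  have hcover : range f ⊆ ⋃ t ∈ hh.toFinset, Metric.ball t r := by
    rintro _ ⟨x, rfl⟩
    exact mem_biUnion (hh.mem_toFinset.2 (mem_range_self x))
      ((BoundedContinuousFunction.dist_coe_le_dist x).trans_lt hfh)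
  calc volume (range f) ≤ ∑ t ∈ hh.toFinset, volume (Metric.ball t r) :=
        (measure_mono hcover).trans (measure_biUnion_finset_le _ _)
    _ = (range h).ncard * ENNReal.ofReal (2 * r) := by
        simp [Real.volume_ball, ncard_eq_toFinset_card _ hh]

/-- Shrinking the radius with `#(range h)` is what forces a null range in the limit. -/
def finiteRangeRadius (k : ℕ) (h : Z →ᵇ ℝ) : ℝ :=
  (2 * (k + 1) * ((range h).ncard + 1))⁻¹

def nullRangeResidual (K : Set (Z →ᵇ ℝ)) : Set K :=
  ⋂ k : ℕ, ⋃ h ∈ {h : K | (range ⇑(h : Z →ᵇ ℝ)).Finite},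
    Metric.ball h (finiteRangeRadius k (h : Z →ᵇ ℝ))

lemma isOpen_nullRangeResidual_stage (k : ℕ) :
    IsOpen (⋃ h ∈ {h : K | (range ⇑(h : Z →ᵇ ℝ)).Finite},
      Metric.ball h (finiteRangeRadius k (h : Z →ᵇ ℝ))) :=
  isOpen_biUnion fun _ _ => Metric.isOpen_ball

lemma isGδ_nullRangeResidual : IsGδ (nullRangeResidual K) :=
  IsGδ.iInter fun k => (isOpen_nullRangeResidual_stage k).isGδ

lemma dense_nullRangeResidual [BaireSpace K]
    (hd : Dense {h : K | (range ⇑(h : Z →ᵇ ℝ)).Finite}) : Dense (nullRangeResidual K) :=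
  dense_iInter_of_isOpen isOpen_nullRangeResidual_stage fun k =>
    hd.mono fun h hh =>
      mem_biUnion hh (Metric.mem_ball_self (by unfold finiteRangeRadius; positivity))

lemma volume_range_eq_zero_of_mem_nullRangeResidual {f : K} (hf : f ∈ nullRangeResidual K) :
    volume (range ⇑(f : Z →ᵇ ℝ)) = 0 := by
  have hk : ∀ k : ℕ, volume (range ⇑(f : Z →ᵇ ℝ)) ≤ ENNReal.ofReal (1 / (k + 1)) := fun k => by
    obtain ⟨h, hfin, hball⟩ := mem_iUnion₂.1 (mem_iInter.1 hf k)
    refine (volume_range_le_of_dist_lt hfin hball).trans ?_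
    rw [← ENNReal.ofReal_natCast, ← ENNReal.ofReal_mul (Nat.cast_nonneg _)]
    refine ENNReal.ofReal_le_ofReal ?_
    have hm : (0 : ℝ) ≤ (range ⇑(h : Z →ᵇ ℝ)).ncard := Nat.cast_nonneg _
    unfold finiteRangeRadius
    generalize ((range ⇑(h : Z →ᵇ ℝ)).ncard : ℝ) = m at hm ⊢
    field_simp
    linarith
  have hlim : Tendsto (fun k : ℕ => ENNReal.ofReal (1 / (k + 1))) atTop (𝓝 0) :=
    ENNReal.ofReal_zero ▸ ENNReal.tendsto_ofReal tendsto_one_div_add_atTop_nhds_zero_nat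
  exact le_zero_iff.1 (ge_of_tendsto' hlim hk)

end NullRange

section Dimension

variable {p : ℕ} {F : Set (EuclideanSpace ℝ (Fin p))} {f : F → ℝ}

lemma zero_mem_DstarF_set : (0 : ℝ) ∈
    {d : ℝ | 0 < volume {r : ℝ | ENNReal.ofReal d ≤ dimH (Subtype.val '' (f ⁻¹' {r}))}} := by
  simp

lemma DstarF_nonneg : 0 ≤ DstarF F f :=
  Real.sSup_nonneg' ⟨0, zero_mem_DstarF_set, le_rfl⟩

/-- If `d > 0`, only values `r` in the range can have fibres of dimension `≥ d`. -/
lemma DstarF_eq_zero_of_volume_range (hf : volume (range f) = 0) : DstarF F f = 0 := by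
  refine IsGreatest.csSup_eq ⟨zero_mem_DstarF_set, fun d hd => not_lt.1 fun hd0 => ?_⟩
  refine (measure_mono_null (fun r hr => ?_) hf).not_gt hd
  by_contra hrf
  have : f ⁻¹' {r} = ∅ := eq_empty_of_forall_notMem fun x hx => hrf ⟨x, hx⟩
  simp only [mem_ofPred_eq, this, image_empty, dimH_empty, nonpos_iff_eq_zero,
    ENNReal.ofReal_eq_zero] at hr
  linarith

end Dimension

theorem sSup_sInf_image_dense_isGδ_eq_zero {Y : Type*} [TopologicalSpace Y] [BaireSpace Y]
    [Nonempty Y] {Φ : Y → ℝ} (hΦ : ∀ y, 0 ≤ Φ y) {G₀ : Set Y} (hd : Dense G₀) (hG₀ : IsGδ G₀)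
    (hzero : ∀ y ∈ G₀, Φ y = 0) :
    sSup {d : ℝ | ∃ G : Set Y, Dense G ∧ IsGδ G ∧ d = sInf (Φ '' G)} = 0 := by
  have hmem : ∀ d ∈ {d : ℝ | ∃ G : Set Y, Dense G ∧ IsGδ G ∧ d = sInf (Φ '' G)}, d = 0 := by
    rintro _ ⟨G, hG, hGδ, rfl⟩
    obtain ⟨y, hyG, hy₀⟩ := (hG.inter_of_Gδ hGδ hG₀ hd).nonempty
    refine le_antisymm ?_ (Real.sInf_nonneg (forall_mem_image.2 fun y _ => hΦ y))
    exact hzero y hy₀ ▸ csInf_le ⟨0, forall_mem_image.2 fun y _ => hΦ y⟩ (mem_image_of_mem Φ hyG)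
  exact le_antisymm (Real.sSup_nonpos fun d hd => (hmem d hd).le)
    (Real.sSup_nonneg fun d hd => (hmem d hd).ge)

/-- For `F = C × C` (C the fat Cantor set) and `0 < α < 1/2`,
`D_*(α, F) = 0`; moreover there is a dense Gδ subset `𝒢` of `C₁^α(F)` with
`λ(f(F)) = 0` for every `f ∈ 𝒢`. -/
theorem stmt15 (α : ℝ) (hα0 : 0 < α) (hα1 : α < 1 / 2) :
    DStar α fatSquare = 0 ∧
    ∃ G : Set ↥(HolderBall α fatSquare), Dense G ∧ IsGδ G ∧
      ∀ f ∈ G, volume (Set.range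
        ⇑((f : ↥(HolderBall α fatSquare)) : BoundedContinuousFunction ↥fatSquare ℝ)) = 0 := by
  have hdense := dense_nullRangeResidual (dense_finiteRange_holderBall_fatSquare hα0 hα1)
  have hnull : ∀ f ∈ nullRangeResidual (HolderBall α fatSquare),
      volume (range ⇑(f : fatSquare →ᵇ ℝ)) = 0 :=
    fun _ hf => volume_range_eq_zero_of_mem_nullRangeResidual hf
  exact ⟨sSup_sInf_image_dense_isGδ_eq_zero (fun _ => DstarF_nonneg) hdense
      isGδ_nullRangeResidual fun f hf => DstarF_eq_zero_of_volume_range (hnull f hf),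
    _, hdense, isGδ_nullRangeResidual, hnull⟩

end
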